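/- Let H be the linear map on ℝ⁴ given by the matrix (1/2)·[[1,1,1,1],[1,−1,1,−1],[1,1,−1,−1],[1,−1,−1,1]] (so H is an orthogonal involution). Then, with polar duals K° := {f ∈ ℝ⁴ : ∀ x ∈ K, f·x ≤ 1}, the following three identities hold: 𝒞° = (1/2)·H(𝒩), 𝒩° = (1/2)·H(𝒞), and Q° = (1/2)·H(Q). In particular, the quantum correlation body Q is self-dual up to the orthogonal transformation H. -/

import Mathlib

/-!
The classical and no-signalling cases are linear algebra. The even sign vectors are exactly the
rows `±wₖ` of the Walsh matrix `W = 2H`, so `𝒞°` is cut out by `|(W f)ₖ| ≤ 1`; and `𝒩°` is the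
`ℓ¹`-ball, which `W` maps into the convex hull of the `±wₖ`.

For `Q`, write its points as correlations `cᵢⱼ = ⟪aᵢ, bⱼ⟫` of unit vectors. If `g = corr a b`
then `W g` is the correlation of `a₀ ± a₁` and `b₀ ± b₁`, so for `c = corr a' b'` the pairing
`(W g)·c` is the inner product of `Σᵢ (a₀ ± a₁)ᵢ ⊗ a'ᵢ` and `Σⱼ (b₀ ± b₁)ⱼ ⊗ b'ⱼ`, two tensors of
norm `2`. Hence `(W g)·c ≤ 4`, which is `½H(Q) ⊆ Q°`. Conversely, for `f ∈ Q°` let `c = corr a b`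
maximise `f·c` over the compact set `Q`. Tilting all four vectors into a fresh orthogonal
direction and letting the tilt tend to zero shows that half the row and column sums of `fᵢⱼcᵢⱼ`
form a feasible point of the dual semidefinite program; that dual point, together with
`f·c ≤ 1`, exhibits `W f` as an element of `Q`.
-/

def Cmat (c : Fin 4 → ℝ) (u v : ℝ) : Matrix (Fin 4) (Fin 4) ℝ :=
  !![1, u, c 0, c 1;
     u, 1, c 2, c 3;
     c 0, c 2, 1, v;
     c 1, c 3, v, 1]

def Qbody : Set (Fin 4 → ℝ) := {c | ∃ u v : ℝ, (Cmat c u v).PosSemidef}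

/-- The classical polytope: convex hull of the eight even sign vectors. -/
def Cpoly : Set (Fin 4 → ℝ) :=
  convexHull ℝ {e : Fin 4 → ℝ | (∀ i, e i = 1 ∨ e i = -1) ∧ e 0 * e 1 * e 2 * e 3 = 1}

/-- The no-signalling body: the cube `[-1,1]⁴`. -/
def Ncube : Set (Fin 4 → ℝ) := {c | ∀ i, c i ∈ Set.Icc (-1 : ℝ) 1}

/-- Polar dual with respect to the standard inner product on `ℝ⁴`. -/
def polarSet (K : Set (Fin 4 → ℝ)) : Set (Fin 4 → ℝ) :=
  {f | ∀ x ∈ K, ∑ i, f i * x i ≤ 1}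

/-- The orthogonal involution `H = (1/2)·[[1,1,1,1],[1,-1,1,-1],[1,1,-1,-1],[1,-1,-1,1]]`. -/
noncomputable def Hmat : Matrix (Fin 4) (Fin 4) ℝ :=
  (1 / 2 : ℝ) • !![1, 1, 1, 1;
                   1, -1, 1, -1;
                   1, 1, -1, -1;
                   1, -1, -1, 1]

open Matrix

lemma Convex.sum_smul_mem_of_sum_abs_le_one {E ι : Type*} [AddCommGroup E] [Module ℝ E]
    {K : Set E} (hK : Convex ℝ K) (h0 : (0 : E) ∈ K) {s : Finset ι} {v : ι → E}
    (hv : ∀ i ∈ s, v i ∈ K ∧ -v i ∈ K) {t : ι → ℝ} (ht : ∑ i ∈ s, |t i| ≤ 1) :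
    ∑ i ∈ s, t i • v i ∈ K := by
  set S := ∑ i ∈ s, |t i|
  have hS : 0 ≤ S := Finset.sum_nonneg fun i _ => abs_nonneg (t i)
  rcases hS.eq_or_lt with hS0 | hSpos
  · have ht0 : ∀ i ∈ s, t i = 0 := fun i hi =>
      abs_eq_zero.mp ((Finset.sum_eq_zero_iff_of_nonneg fun i _ => abs_nonneg (t i)).mp
        hS0.symm i hi)
    rwa [Finset.sum_eq_zero fun i hi => by rw [ht0 i hi, zero_smul]]
  set w : ι → E := fun i => if 0 ≤ t i then v i else -v i
  have hw : ∀ i, t i • v i = |t i| • w i := fun i => by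
    by_cases hti : 0 ≤ t i
    · simp [w, hti, abs_of_nonneg hti]
    · simp [w, hti, abs_of_neg (not_le.mp hti)]
  have hmem : ∑ i ∈ s, (|t i| / S) • w i ∈ K := by
    refine hK.sum_mem (fun i _ => by positivity) ?_ fun i hi => ?_
    · rw [← Finset.sum_div, div_self hSpos.ne']
    · by_cases hti : 0 ≤ t i
      · simpa [w, hti] using (hv i hi).1
      · simpa [w, hti] using (hv i hi).2
  have key : ∑ i ∈ s, t i • v i = S • ∑ i ∈ s, (|t i| / S) • w i := by
    simp only [hw, Finset.smul_sum, smul_smul]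
    exact Finset.sum_congr rfl fun i _ => by rw [mul_div_cancel₀ _ hSpos.ne']
  rw [key]
  exact hK.smul_mem_of_zero_mem h0 hmem ⟨hS, ht⟩

open scoped MatrixOrder in
lemma Matrix.PosSemidef.exists_eq_gram {n : Type*} [Fintype n] [DecidableEq n] {M : Matrix n n ℝ}
    (hM : M.PosSemidef) : ∃ v : n → EuclideanSpace ℝ n, gram ℝ v = M := by
  obtain ⟨B, rfl⟩ := CStarAlgebra.nonneg_iff_eq_star_mul_self.mp hM.nonneg
  refine ⟨fun i => WithLp.toLp 2 fun k => B k i, ?_⟩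
  ext i j
  simp [mul_apply, PiLp.inner_apply, mul_comm]

def walsh : Matrix (Fin 4) (Fin 4) ℝ :=
  !![1, 1, 1, 1;
     1, -1, 1, -1;
     1, 1, -1, -1;
     1, -1, -1, 1]

lemma walsh_transpose : walshᵀ = walsh := by
  ext i j; fin_cases i <;> fin_cases j <;> rfl

lemma walsh_mul_self : walsh * walsh = (4 : ℝ) • 1 := by
  ext i j; fin_cases i <;> fin_cases j <;> simp [walsh, mul_apply, Fin.sum_univ_four] <;> norm_num

lemma walsh_mulVec_walsh_mulVec (x : Fin 4 → ℝ) :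
    walsh *ᵥ walsh *ᵥ x = (4 : ℝ) • x := by
  rw [mulVec_mulVec, walsh_mul_self, smul_mulVec, one_mulVec]

lemma dotProduct_walsh_mulVec (f x : Fin 4 → ℝ) :
    f ⬝ᵥ walsh *ᵥ x = walsh *ᵥ f ⬝ᵥ x := by
  rw [dotProduct_mulVec, ← mulVec_transpose, walsh_transpose]

lemma mem_image_halfHmat_iff (K : Set (Fin 4 → ℝ)) (f : Fin 4 → ℝ) :
    f ∈ (fun x : Fin 4 → ℝ => (1 / 2 : ℝ) • Hmat.mulVec x) '' K ↔ walsh *ᵥ f ∈ K := by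
  have hHmat : ∀ x, (1 / 2 : ℝ) • Hmat *ᵥ x = (1 / 4 : ℝ) • walsh *ᵥ x := fun x => by
    rw [show Hmat = (1 / 2 : ℝ) • walsh from rfl, smul_mulVec, smul_smul]; norm_num
  have hinv : ∀ x, (1 / 4 : ℝ) • walsh *ᵥ walsh *ᵥ x = x := fun x => by
    rw [walsh_mulVec_walsh_mulVec, smul_smul]; norm_num
  simp only [Set.mem_image, hHmat]
  constructor
  · rintro ⟨x, hx, rfl⟩
    rwa [mulVec_smul, hinv]
  · exact fun h => ⟨_, h, hinv f⟩

lemma polarSet_convexHull (S : Set (Fin 4 → ℝ)) : polarSet (convexHull ℝ S) = polarSet S := by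
  ext f
  refine ⟨fun h x hx => h x (subset_convexHull ℝ S hx), fun h => ?_⟩
  exact convexHull_min h (convex_halfSpace_le (dotProductBilin ℝ ℝ f).isLinear 1)

def evenSigns : Set (Fin 4 → ℝ) :=
  {e | (∀ i, e i = 1 ∨ e i = -1) ∧ e 0 * e 1 * e 2 * e 3 = 1}

lemma evenSigns_eq : evenSigns = {e | ∃ k, e = walsh k ∨ e = -walsh k} := by
  ext e
  constructor
  · rintro ⟨hsign, hprod⟩
    rw [show e = ![e 0, e 1, e 2, e 3] by ext i; fin_cases i <;> rfl]
    rcases hsign 0 with h0 | h0 <;> rcases hsign 1 with h1 | h1 <;>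
      rcases hsign 2 with h2 | h2 <;> rcases hsign 3 with h3 | h3 <;>
      rw [h0, h1, h2, h3] at hprod ⊢ <;> norm_num at hprod <;>
      simp [Fin.exists_fin_succ, walsh, ← List.ofFn_inj]
  · rintro ⟨k, rfl | rfl⟩ <;> fin_cases k <;> refine ⟨fun i => ?_, ?_⟩ <;> (try fin_cases i) <;>
      simp [walsh]

lemma polarSet_Cpoly_eq : polarSet Cpoly = polarSet evenSigns :=
  polarSet_convexHull evenSigns

lemma walsh_mulVec_apply (f : Fin 4 → ℝ) (k : Fin 4) : (walsh *ᵥ f) k = f ⬝ᵥ walsh k :=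
  dotProduct_comm _ _

lemma mem_polarSet_evenSigns_iff (f : Fin 4 → ℝ) :
    f ∈ polarSet evenSigns ↔ walsh *ᵥ f ∈ Ncube := by
  rw [evenSigns_eq]
  constructor
  · intro h k
    have hpos : f ⬝ᵥ walsh k ≤ 1 := h _ ⟨k, Or.inl rfl⟩
    have hneg : f ⬝ᵥ -walsh k ≤ 1 := h _ ⟨k, Or.inr rfl⟩
    rw [dotProduct_neg] at hneg
    rw [walsh_mulVec_apply]
    exact ⟨by linarith, hpos⟩
  · rintro h _ ⟨k, rfl | rfl⟩
    · exact (walsh_mulVec_apply f k ▸ h k).2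
    · have := (walsh_mulVec_apply f k ▸ h k).1
      show f ⬝ᵥ -walsh k ≤ 1
      rw [dotProduct_neg]; linarith

lemma polarSet_Cpoly :
    polarSet Cpoly = (fun x : Fin 4 → ℝ => (1 / 2 : ℝ) • Hmat.mulVec x) '' Ncube := by
  ext f
  rw [mem_image_halfHmat_iff, ← mem_polarSet_evenSigns_iff, polarSet_Cpoly_eq]

lemma sum_abs_le_one_of_mem_polarSet_Ncube {f : Fin 4 → ℝ} (hf : f ∈ polarSet Ncube) :
    ∑ i, |f i| ≤ 1 := by
  set y : Fin 4 → ℝ := fun i => if 0 ≤ f i then 1 else -1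
  have hy : y ∈ Ncube := fun i => by by_cases h : 0 ≤ f i <;> simp [y, h]
  calc ∑ i, |f i| = ∑ i, f i * y i := Finset.sum_congr rfl fun i _ => by
        by_cases h : 0 ≤ f i
        · simp [y, h, abs_of_nonneg h]
        · simp [y, h, abs_of_neg (not_le.mp h)]
    _ ≤ 1 := hf y hy

lemma polarSet_Ncube :
    polarSet Ncube = (fun x : Fin 4 → ℝ => (1 / 2 : ℝ) • Hmat.mulVec x) '' Cpoly := by
  ext f
  rw [mem_image_halfHmat_iff]
  constructor
  · intro hf
    have hsum : walsh *ᵥ f = ∑ k, f k • walsh k := by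
      rw [← vecMul_transpose, walsh_transpose, vecMul_eq_sum]
    have hvert : ∀ k, walsh k ∈ evenSigns ∧ -walsh k ∈ evenSigns := fun k => by
      rw [evenSigns_eq]; exact ⟨⟨k, Or.inl rfl⟩, ⟨k, Or.inr rfl⟩⟩
    have hK : ∀ k, walsh k ∈ Cpoly ∧ -walsh k ∈ Cpoly := fun k =>
      (hvert k).imp (subset_convexHull ℝ _ ·) (subset_convexHull ℝ _ ·)
    have h0 : (0 : Fin 4 → ℝ) ∈ Cpoly := by
      simpa [Cpoly] using convex_convexHull ℝ _ (hK 0).1 (hK 0).2 (by norm_num : (0 : ℝ) ≤ 1 / 2)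
        (by norm_num : (0 : ℝ) ≤ 1 / 2) (by norm_num)
    rw [hsum]
    exact (convex_convexHull ℝ _).sum_smul_mem_of_sum_abs_le_one h0 (fun k _ => hK k)
      (sum_abs_le_one_of_mem_polarSet_Ncube hf)
  · intro hf y hy
    have hx : (1 / 4 : ℝ) • walsh *ᵥ y ∈ polarSet Cpoly := by
      rw [polarSet_Cpoly_eq, mem_polarSet_evenSigns_iff, mulVec_smul,
        walsh_mulVec_walsh_mulVec, smul_smul]
      norm_num
      exact hy
    calc f ⬝ᵥ y = (1 / 4 : ℝ) • walsh *ᵥ y ⬝ᵥ walsh *ᵥ f := by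
          rw [smul_dotProduct, dotProduct_walsh_mulVec, walsh_mulVec_walsh_mulVec, smul_eq_mul,
            smul_dotProduct, smul_eq_mul, dotProduct_comm]
          ring
      _ ≤ 1 := hx _ hf

open scoped RealInnerProductSpace TensorProduct

section InnerProductSpace

variable {E F : Type*} [NormedAddCommGroup E] [InnerProductSpace ℝ E]
  [NormedAddCommGroup F] [InnerProductSpace ℝ F]

def corr (a b : Fin 2 → E) : Fin 4 → ℝ :=
  ![⟪a 0, b 0⟫, ⟪a 0, b 1⟫, ⟪a 1, b 0⟫, ⟪a 1, b 1⟫]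

lemma Cmat_corr {a b : Fin 2 → E} (ha : ∀ i, ‖a i‖ = 1) (hb : ∀ j, ‖b j‖ = 1) :
    Cmat (corr a b) ⟪a 0, a 1⟫ ⟪b 0, b 1⟫ = gram ℝ ![a 0, a 1, b 0, b 1] := by
  ext i j
  fin_cases i <;> fin_cases j <;> simp [Cmat, corr, ha, hb, real_inner_comm]

lemma corr_mem_Qbody {a b : Fin 2 → E} (ha : ∀ i, ‖a i‖ = 1) (hb : ∀ j, ‖b j‖ = 1) :
    corr a b ∈ Qbody :=
  ⟨_, _, Cmat_corr ha hb ▸ posSemidef_gram ℝ _⟩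

lemma walsh_mulVec_corr (a b : Fin 2 → E) :
    walsh *ᵥ corr a b = corr ![a 0 + a 1, a 0 - a 1] ![b 0 + b 1, b 0 - b 1] := by
  ext k
  fin_cases k <;>
    simp [walsh, corr, mulVec, dotProduct, Fin.sum_univ_four, inner_add_left, inner_add_right,
      inner_sub_left, inner_sub_right] <;> ring

lemma corr_dotProduct_corr (a b : Fin 2 → E) (a' b' : Fin 2 → F) :
    corr a b ⬝ᵥ corr a' b' = ⟪∑ i, a i ⊗ₜ[ℝ] a' i, ∑ j, b j ⊗ₜ[ℝ] b' j⟫ := by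
  simp [corr, dotProduct, Fin.sum_univ_four, inner_add_left, inner_add_right]
  ring

lemma norm_add_tmul_add_sub_tmul {a : Fin 2 → E} {a' : Fin 2 → F} (ha : ∀ i, ‖a i‖ = 1)
    (ha' : ∀ i, ‖a' i‖ = 1) : ‖(a 0 + a 1) ⊗ₜ[ℝ] a' 0 + (a 0 - a 1) ⊗ₜ[ℝ] a' 1‖ = 2 := by
  rw [← sq_eq_sq₀ (norm_nonneg _) zero_le_two, ← real_inner_self_eq_norm_sq]
  simp only [inner_add_left, inner_add_right, inner_sub_left, inner_sub_right,
    TensorProduct.inner_tmul, real_inner_self_eq_norm_sq, ha, ha', real_inner_comm (a 0)]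
  ring

/-- `v` rotated by the angle `θ` with `tan (θ / 2) = τ` towards a unit vector orthogonal to `E`;
the half-angle parametrisation keeps all inner products rational in `τ`. -/
noncomputable def tilt (τ : ℝ) (v : E) : WithLp 2 (E × ℝ) :=
  WithLp.toLp 2 (((1 - τ ^ 2) / (1 + τ ^ 2)) • v, 2 * τ / (1 + τ ^ 2))

lemma inner_tilt_tilt (τ σ : ℝ) (v w : E) :
    ⟪tilt τ v, tilt σ w⟫ =
      ((1 - τ ^ 2) * (1 - σ ^ 2) * ⟪v, w⟫ + 4 * τ * σ) / ((1 + τ ^ 2) * (1 + σ ^ 2)) := by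
  simp only [tilt, WithLp.prod_inner_apply, inner_smul_left, inner_smul_right,
    RCLike.conj_to_real, Real.inner_apply]
  field_simp
  ring

lemma norm_tilt (τ : ℝ) {v : E} (hv : ‖v‖ = 1) : ‖tilt τ v‖ = 1 := by
  refine (pow_eq_one_iff_of_nonneg (norm_nonneg _) two_ne_zero).mp ?_
  rw [← real_inner_self_eq_norm_sq, inner_tilt_tilt, real_inner_self_eq_norm_sq, hv]
  field_simp
  ring

lemma inner_tilt_mul_sub_inner (t p q : ℝ) (v w : E) :
    ⟪tilt (t * p) v, tilt (t * q) w⟫ - ⟪v, w⟫ =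
      t ^ 2 * ((4 * p * q - 2 * (p ^ 2 + q ^ 2) * ⟪v, w⟫) /
        ((1 + (t * p) ^ 2) * (1 + (t * q) ^ 2))) := by
  rw [inner_tilt_tilt]
  field_simp
  ring

end InnerProductSpace

lemma exists_corr_eq_of_mem_Qbody {c : Fin 4 → ℝ} (hc : c ∈ Qbody) :
    ∃ a b : Fin 2 → EuclideanSpace ℝ (Fin 4), (∀ i, ‖a i‖ = 1) ∧ (∀ j, ‖b j‖ = 1) ∧
      corr a b = c := by
  obtain ⟨u, v, hpsd⟩ := hc
  obtain ⟨w, hw⟩ := hpsd.exists_eq_gram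
  have hentry : ∀ i j, ⟪w i, w j⟫ = Cmat c u v i j := fun i j => by rw [← hw, gram_apply]
  have hunit : ∀ i, ‖w i‖ = 1 := fun i => by
    have h : ‖w i‖ ^ 2 = 1 := by
      rw [← real_inner_self_eq_norm_sq, hentry]; fin_cases i <;> simp [Cmat]
    exact (pow_eq_one_iff_of_nonneg (norm_nonneg _) two_ne_zero).mp h
  refine ⟨![w 0, w 1], ![w 2, w 3], fun i => ?_, fun j => ?_, ?_⟩
  · fin_cases i <;> simp [hunit]
  · fin_cases j <;> simp [hunit]
  · ext k; fin_cases k <;> simp [corr, hentry, Cmat]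

lemma walsh_mulVec_dotProduct_le {g c : Fin 4 → ℝ} (hg : g ∈ Qbody) (hc : c ∈ Qbody) :
    walsh *ᵥ g ⬝ᵥ c ≤ 4 := by
  obtain ⟨a, b, ha, hb, rfl⟩ := exists_corr_eq_of_mem_Qbody hg
  obtain ⟨a', b', ha', hb', rfl⟩ := exists_corr_eq_of_mem_Qbody hc
  rw [walsh_mulVec_corr, corr_dotProduct_corr]
  calc _ ≤ ‖∑ i, ![a 0 + a 1, a 0 - a 1] i ⊗ₜ[ℝ] a' i‖ *
        ‖∑ j, ![b 0 + b 1, b 0 - b 1] j ⊗ₜ[ℝ] b' j‖ := real_inner_le_norm _ _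
    _ = 2 * 2 := by
        simp only [Fin.sum_univ_two, Matrix.cons_val_zero, Matrix.cons_val_one]
        rw [norm_add_tmul_add_sub_tmul ha ha', norm_add_tmul_add_sub_tmul hb hb']
    _ = 4 := by norm_num

lemma isCompact_Qbody : IsCompact Qbody := by
  set S : Set (Fin 2 → EuclideanSpace ℝ (Fin 4)) := Set.univ.pi fun _ => Metric.sphere 0 1
  have hS : IsCompact S := isCompact_univ_pi fun _ => isCompact_sphere 0 1
  have hQ : Qbody = (fun p => corr p.1 p.2) '' (S ×ˢ S) := by
    ext c
    constructor
    · intro hc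
      obtain ⟨a, b, ha, hb, rfl⟩ := exists_corr_eq_of_mem_Qbody hc
      exact ⟨(a, b), ⟨fun i _ => by simpa using ha i, fun j _ => by simpa using hb j⟩, rfl⟩
    · rintro ⟨⟨a, b⟩, ⟨ha, hb⟩, rfl⟩
      exact corr_mem_Qbody (fun i => by simpa using ha i trivial)
        (fun j => by simpa using hb j trivial)
  rw [hQ]
  exact (hS.prod hS).image (by unfold corr; fun_prop)

/-- Half the row and column sums of `fᵢⱼ cᵢⱼ` form a feasible point, of value `f ⬝ᵥ c`, of the
dual of the semidefinite program `max {f ⬝ᵥ c | c ∈ Qbody}`. -/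
def DualFeasible (f c : Fin 4 → ℝ) : Prop :=
  ∀ x y : Fin 2 → ℝ,
    2 * (f 0 * (x 0 * y 0) + f 1 * (x 0 * y 1) + f 2 * (x 1 * y 0) + f 3 * (x 1 * y 1)) ≤
      f 0 * c 0 * (x 0 ^ 2 + y 0 ^ 2) + f 1 * c 1 * (x 0 ^ 2 + y 1 ^ 2) +
        f 2 * c 2 * (x 1 ^ 2 + y 0 ^ 2) + f 3 * c 3 * (x 1 ^ 2 + y 1 ^ 2)

lemma dualFeasible_of_isMaxOn {E : Type*} [NormedAddCommGroup E] [InnerProductSpace ℝ E]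
    {f : Fin 4 → ℝ} {a b : Fin 2 → E} (ha : ∀ i, ‖a i‖ = 1) (hb : ∀ j, ‖b j‖ = 1)
    (hmax : IsMaxOn (f ⬝ᵥ ·) Qbody (corr a b)) : DualFeasible f (corr a b) := by
  intro x y
  set c := corr a b
  set D : ℝ → ℝ → ℝ → ℝ → ℝ := fun t p q r =>
    (4 * p * q - 2 * (p ^ 2 + q ^ 2) * r) / ((1 + (t * p) ^ 2) * (1 + (t * q) ^ 2))
  set φ : ℝ → ℝ := fun t => f 0 * D t (x 0) (y 0) (c 0) + f 1 * D t (x 0) (y 1) (c 1) +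
    f 2 * D t (x 1) (y 0) (c 2) + f 3 * D t (x 1) (y 1) (c 3)
  have hφ : ∀ t ≠ 0, φ t ≤ 0 := by
    intro t ht
    set a' := fun i => tilt (t * x i) (a i)
    set b' := fun j => tilt (t * y j) (b j)
    have hle : f ⬝ᵥ corr a' b' ≤ f ⬝ᵥ c :=
      hmax (corr_mem_Qbody (fun i => norm_tilt _ (ha i)) (fun j => norm_tilt _ (hb j)))
    have hdiff : t ^ 2 * φ t = f ⬝ᵥ corr a' b' - f ⬝ᵥ c := by
      simp only [φ, D, c, a', b', corr, dotProduct, Fin.sum_univ_four, Matrix.cons_val]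
      linear_combination -(f 0 * inner_tilt_mul_sub_inner t (x 0) (y 0) (a 0) (b 0) +
        f 1 * inner_tilt_mul_sub_inner t (x 0) (y 1) (a 0) (b 1) +
        f 2 * inner_tilt_mul_sub_inner t (x 1) (y 0) (a 1) (b 0) +
        f 3 * inner_tilt_mul_sub_inner t (x 1) (y 1) (a 1) (b 1))
    have : t ^ 2 * φ t ≤ t ^ 2 * 0 := by rw [hdiff]; linarith
    exact le_of_mul_le_mul_left this (by positivity)
  have hcont : Continuous φ := by
    simp only [φ, D]
    fun_prop (disch := intro t; positivity)
  have h0 : φ 0 ≤ 0 :=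
    le_of_tendsto ((hcont.tendsto 0).mono_left nhdsWithin_le_nhds)
      (eventually_nhdsWithin_of_forall (s := {0}ᶜ) hφ)
  simp only [φ, D, zero_mul] at h0
  norm_num at h0
  linarith

lemma isHermitian_Cmat (c : Fin 4 → ℝ) (u v : ℝ) : (Cmat c u v).IsHermitian := by
  ext i j
  fin_cases i <;> fin_cases j <;> rfl

lemma walsh_mulVec_mem_Qbody_of_dualFeasible {f c : Fin 4 → ℝ} (hm : f ⬝ᵥ c ≤ 1)
    (hdual : DualFeasible f c) : walsh *ᵥ f ∈ Qbody := by
  refine ⟨f 0 * c 0 + f 1 * c 1 - (f 2 * c 2 + f 3 * c 3),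
    f 0 * c 0 + f 2 * c 2 - (f 1 * c 1 + f 3 * c 3),
    .of_dotProduct_mulVec_nonneg (isHermitian_Cmat _ _ _) fun z => ?_⟩
  -- this substitution turns `hdual` into: the quadratic form at `z` is `≥ (1 - f ⬝ᵥ c) ‖z‖²`
  have hq := hdual ![z 0 + z 1, z 0 - z 1] ![-(z 2 + z 3), -(z 2 - z 3)]
  have hslack : 0 ≤ (1 - f ⬝ᵥ c) * (z 0 ^ 2 + z 1 ^ 2 + z 2 ^ 2 + z 3 ^ 2) :=
    mul_nonneg (by linarith) (by positivity)
  simp only [dotProduct, Fin.sum_univ_four] at hslack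
  simp [Cmat, walsh, dotProduct, mulVec, Fin.sum_univ_four] at hq ⊢
  linarith

lemma polarSet_Qbody :
    polarSet Qbody = (fun x : Fin 4 → ℝ => (1 / 2 : ℝ) • Hmat.mulVec x) '' Qbody := by
  ext f
  rw [mem_image_halfHmat_iff]
  constructor
  · intro hf
    have hne : Qbody.Nonempty := ⟨_, corr_mem_Qbody (a := fun _ => (1 : ℝ)) (b := fun _ => 1)
      (fun _ => norm_one) (fun _ => norm_one)⟩
    obtain ⟨c, hc, hmax⟩ := isCompact_Qbody.exists_isMaxOn hne
      (continuous_const.dotProduct continuous_id).continuousOn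
    obtain ⟨a, b, ha, hb, rfl⟩ := exists_corr_eq_of_mem_Qbody hc
    exact walsh_mulVec_mem_Qbody_of_dualFeasible (hf _ hc) (dualFeasible_of_isMaxOn ha hb hmax)
  · intro hg c hc
    calc f ⬝ᵥ c = (walsh *ᵥ walsh *ᵥ f ⬝ᵥ c) / 4 := by
          rw [walsh_mulVec_walsh_mulVec, smul_dotProduct, smul_eq_mul]; ring
      _ ≤ 1 := by linarith [walsh_mulVec_dotProduct_le hg hc]

theorem stmt6 :
    polarSet Cpoly = (fun x : Fin 4 → ℝ => (1 / 2 : ℝ) • Hmat.mulVec x) '' Ncube ∧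
    polarSet Ncube = (fun x : Fin 4 → ℝ => (1 / 2 : ℝ) • Hmat.mulVec x) '' Cpoly ∧
    polarSet Qbody = (fun x : Fin 4 → ℝ => (1 / 2 : ℝ) • Hmat.mulVec x) '' Qbody :=
  ⟨polarSet_Cpoly, polarSet_Ncube, polarSet_Qbody⟩
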